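/- Let I(x) be absolutely monotonic with summands concentrating superpolynomially near n ≈ f(x) with window term C x^{-ν}, where f is a polynomial of degree d_f with positive leading coefficient c_f. Let g be another polynomial with positive leading coefficient c_g of degree d_g. Then the summands of I(x) concentrate superpolynomially near n ≈ g(x) (with some window term) if and only if d_f = d_g and c_f = c_g. -/

import Mathlib

open Filter Asymptotics Polynomial

noncomputable def Iser (a : ℕ → ℝ) (x : ℝ) : ℝ := ∑' n : ℕ, a n * x ^ n

noncomputable def sumLE (a : ℕ → ℝ) (x y : ℝ) : ℝ :=
  ∑' n : ℕ, if (n : ℤ) ≤ ⌊y⌋ then a n * x ^ n else 0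

noncomputable def sumGE (a : ℕ → ℝ) (x y : ℝ) : ℝ :=
  ∑' n : ℕ, if ⌊y⌋ ≤ (n : ℤ) then a n * x ^ n else 0

/-- `I(x) = Σ aₙ xⁿ` is absolutely monotonic: all coefficients are nonnegative and
the series converges for every `x > 0`. -/
def AbsMono (a : ℕ → ℝ) : Prop :=
  (∀ n, 0 ≤ a n) ∧ ∀ x : ℝ, 0 < x → Summable fun n : ℕ => a n * x ^ n

/-- The summands of `Σ aₙ xⁿ` concentrate superpolynomially near `n ≈ f(x)` with
window term `C x^{-ν}`. -/
def SuperConc (a : ℕ → ℝ) (f : ℝ → ℝ) (C ν : ℝ) : Prop :=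
  ∀ p : ℝ, 0 < p →
    ((fun x : ℝ => sumLE a x (f x * (1 - C * x ^ (-ν))) / Iser a x)
        =o[atTop] fun x : ℝ => x ^ (-p)) ∧
    ((fun x : ℝ => sumGE a x (f x * (1 + C * x ^ (-ν))) / Iser a x)
        =o[atTop] fun x : ℝ => x ^ (-p))

/-- The summands of `Σ aₙ xⁿ` concentrate exponentially near `n ≈ f(x)` with
window term `C x^{-ν}` and parameters `(α, β)`. -/
def ExpConc (a : ℕ → ℝ) (f : ℝ → ℝ) (C ν α β : ℝ) : Prop :=
  ((fun x : ℝ => sumLE a x (f x * (1 - C * x ^ (-ν))) / Iser a x)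
      =O[atTop] fun x : ℝ => Real.exp (-α * x ^ β)) ∧
  ((fun x : ℝ => sumGE a x (f x * (1 + C * x ^ (-ν))) / Iser a x)
      =O[atTop] fun x : ℝ => Real.exp (-α * x ^ β))

/-- A real sequence is subpolynomial if `bₙ / n^p → 0` for every `p > 0`. -/
def Subpoly (b : ℕ → ℝ) : Prop :=
  ∀ p : ℝ, 0 < p → Tendsto (fun n : ℕ => b n / (n : ℝ) ^ p) atTop (nhds 0)

/-!
If the windows around `f(x)` and `g(x)` were eventually disjoint, the lower tail for one and the
upper tail for the other would together cover all of `I(x)`, yet both are `o(I(x))`. For polynomials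
with positive leading coefficients such a separation occurs as soon as the pairs
`(degree, leading coefficient)` differ, compared lexicographically. When they agree, `f - g` has
lower degree, so a window of relative width `C x^{-ν'}` around `g(x)` with `ν' < min ν 1` contains
the window around `f(x)`, and the tails outside it can only be smaller.
-/

open Real Topology

theorem isBigO_div_of_le {α : Type*} {l : Filter α} {s t I : α → ℝ}
    (h : ∀ᶠ x in l, 0 ≤ s x ∧ s x ≤ t x) :
    (fun x => s x / I x) =O[l] fun x => t x / I x := by
  refine IsBigO.of_bound' (h.mono fun x ⟨hs, hst⟩ => ?_)
  simp only [Real.norm_eq_abs, abs_div]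
  exact div_le_div_of_nonneg_right (abs_le_abs hst (by linarith)) (abs_nonneg _)

namespace AbsMono

variable {a : ℕ → ℝ} {x : ℝ}

theorem term_nonneg (ha : AbsMono a) (hx : 0 ≤ x) (n : ℕ) : 0 ≤ a n * x ^ n :=
  mul_nonneg (ha.1 n) (pow_nonneg hx n)

theorem summable_ite (ha : AbsMono a) (hx : 0 < x) (P : ℕ → Prop) [DecidablePred P] :
    Summable fun n => if P n then a n * x ^ n else 0 :=
  (ha.2 x hx).of_nonneg_of_le (fun n => ite_nonneg (ha.term_nonneg hx.le n) le_rfl)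
    (fun n => by split_ifs <;> simp [ha.term_nonneg hx.le n])

theorem sumLE_nonneg (ha : AbsMono a) (hx : 0 ≤ x) (y : ℝ) : 0 ≤ sumLE a x y :=
  tsum_nonneg fun n => ite_nonneg (ha.term_nonneg hx n) le_rfl

theorem sumGE_nonneg (ha : AbsMono a) (hx : 0 ≤ x) (y : ℝ) : 0 ≤ sumGE a x y :=
  tsum_nonneg fun n => ite_nonneg (ha.term_nonneg hx n) le_rfl

theorem monotone_sumLE (ha : AbsMono a) (hx : 0 < x) : Monotone (sumLE a x) := by
  intro y₁ y₂ hy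
  refine (ha.summable_ite hx _).tsum_le_tsum (fun n => ?_) (ha.summable_ite hx _)
  have := Int.floor_mono hy
  split_ifs <;> first | exact le_rfl | omega | exact ha.term_nonneg hx.le n

theorem antitone_sumGE (ha : AbsMono a) (hx : 0 < x) : Antitone (sumGE a x) := by
  intro y₁ y₂ hy
  refine (ha.summable_ite hx _).tsum_le_tsum (fun n => ?_) (ha.summable_ite hx _)
  have := Int.floor_mono hy
  split_ifs <;> first | exact le_rfl | omega | exact ha.term_nonneg hx.le n

theorem Iser_le_sumLE_add_sumGE (ha : AbsMono a) (hx : 0 < x) {y z : ℝ} (hyz : y ≤ z) :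
    Iser a x ≤ sumLE a x z + sumGE a x y := by
  rw [Iser, sumLE, sumGE, ← (ha.summable_ite hx _).tsum_add (ha.summable_ite hx _)]
  refine (ha.2 x hx).tsum_le_tsum (fun n => ?_)
    ((ha.summable_ite hx _).add (ha.summable_ite hx _))
  have := Int.floor_mono hyz
  have := ha.term_nonneg hx.le n
  split_ifs <;> first | omega | linarith

theorem Iser_pos (ha : AbsMono a) (hne : ∃ n, a n ≠ 0) (hx : 0 < x) : 0 < Iser a x := by
  obtain ⟨n, hn⟩ := hne
  exact (ha.2 x hx).tsum_pos (ha.term_nonneg hx.le) n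
    (mul_pos ((ha.1 n).lt_of_ne' hn) (pow_pos hx n))

end AbsMono

namespace SuperConc

variable {a : ℕ → ℝ} {F G : ℝ → ℝ}

theorem of_eventually_window {C ν C' ν' : ℝ} (ha : AbsMono a) (hF : SuperConc a F C ν)
    (hlow : ∀ᶠ x in atTop, G x * (1 - C' * x ^ (-ν')) ≤ F x * (1 - C * x ^ (-ν)))
    (hhigh : ∀ᶠ x in atTop, F x * (1 + C * x ^ (-ν)) ≤ G x * (1 + C' * x ^ (-ν'))) :
    SuperConc a G C' ν' := by
  intro p hp
  obtain ⟨hlowF, hhighF⟩ := hF p hp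
  refine ⟨(isBigO_div_of_le ?_).trans_isLittleO hlowF,
    (isBigO_div_of_le ?_).trans_isLittleO hhighF⟩
  · filter_upwards [hlow, eventually_gt_atTop 0] with x h hx
    exact ⟨ha.sumLE_nonneg hx.le _, ha.monotone_sumLE hx h⟩
  · filter_upwards [hhigh, eventually_gt_atTop 0] with x h hx
    exact ⟨ha.sumGE_nonneg hx.le _, ha.antitone_sumGE hx h⟩

theorem not_eventually_le {C₁ ν₁ C₂ ν₂ : ℝ} (ha : AbsMono a) (hne : ∃ n, a n ≠ 0)
    (hF : SuperConc a F C₁ ν₁) (hG : SuperConc a G C₂ ν₂) :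
    ¬ ∀ᶠ x in atTop, F x * (1 + C₁ * x ^ (-ν₁)) ≤ G x * (1 - C₂ * x ^ (-ν₂)) := by
  intro hsep
  have hdecay : Tendsto (fun x : ℝ => x ^ (-1 : ℝ)) atTop (𝓝 0) :=
    tendsto_rpow_neg_atTop one_pos
  have htails : Tendsto (fun x => sumLE a x (G x * (1 - C₂ * x ^ (-ν₂))) / Iser a x +
      sumGE a x (F x * (1 + C₁ * x ^ (-ν₁))) / Iser a x) atTop (𝓝 0) := by
    simpa using ((hG 1 one_pos).1.trans_tendsto hdecay).add
      ((hF 1 one_pos).2.trans_tendsto hdecay)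
  have hcover : ∀ᶠ x in atTop, 1 ≤ sumLE a x (G x * (1 - C₂ * x ^ (-ν₂))) / Iser a x +
      sumGE a x (F x * (1 + C₁ * x ^ (-ν₁))) / Iser a x := by
    filter_upwards [hsep, eventually_gt_atTop 0] with x h hx
    rw [← add_div, one_le_div (ha.Iser_pos hne hx)]
    exact ha.Iser_le_sumLE_add_sumGE hx h
  obtain ⟨x, hsmall, hbig⟩ := ((htails.eventually (eventually_lt_nhds one_pos)).and hcover).exists
  linarith

end SuperConc

namespace Polynomial

theorem tendsto_eval_div_rpow_atTop_zero (p : ℝ[X]) {ρ : ℝ} (h : ∀ n ∈ p.support, (n : ℝ) < ρ) :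
    Tendsto (fun x => p.eval x / x ^ ρ) atTop (𝓝 0) := by
  have hterm : ∀ n ∈ p.support, Tendsto (fun x : ℝ => p.coeff n * x ^ n / x ^ ρ) atTop (𝓝 0) := by
    intro n hn
    have hpow : Tendsto (fun x : ℝ => p.coeff n * x ^ ((n : ℝ) - ρ)) atTop (𝓝 0) := by
      simpa using (tendsto_rpow_neg_atTop (sub_pos.2 (h n hn))).const_mul (p.coeff n)
    refine hpow.congr' ?_
    filter_upwards [eventually_gt_atTop 0] with x hx
    rw [rpow_sub hx, rpow_natCast, mul_div_assoc]
  simpa [eval_eq_sum, Polynomial.sum_def, Finset.sum_div] using tendsto_finsetSum _ hterm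

theorem tendsto_eval_div_rpow_natDegree (p : ℝ[X]) :
    Tendsto (fun x => p.eval x / x ^ (p.natDegree : ℝ)) atTop (𝓝 p.leadingCoeff) := by
  rcases eq_or_ne p 0 with rfl | hp
  · simp
  have := div_tendsto_atTop_leadingCoeff_div_of_degree_eq p (X ^ p.natDegree)
    (by rw [degree_X_pow, degree_eq_natDegree hp])
  simpa [rpow_natCast] using this

theorem eventually_eval_mul_lt_eval_mul {p q : ℝ[X]} (hq : 0 < q.leadingCoeff)
    (hpq : toLex (p.natDegree, p.leadingCoeff) < toLex (q.natDegree, q.leadingCoeff))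
    {u v : ℝ → ℝ} (hu : Tendsto u atTop (𝓝 1)) (hv : Tendsto v atTop (𝓝 1)) :
    ∀ᶠ x in atTop, p.eval x * u x < q.eval x * v x := by
  obtain ⟨L, hL, hpL⟩ : ∃ L < q.leadingCoeff,
      Tendsto (fun x => p.eval x / x ^ (q.natDegree : ℝ)) atTop (𝓝 L) := by
    rcases Prod.Lex.toLex_lt_toLex.1 hpq with hdeg | ⟨hdeg, hlead⟩
    · refine ⟨0, hq, p.tendsto_eval_div_rpow_atTop_zero fun n hn => ?_⟩
      exact_mod_cast (le_natDegree_of_mem_supp n hn).trans_lt hdeg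
    · refine ⟨p.leadingCoeff, hlead, ?_⟩
      simpa only [← show p.natDegree = q.natDegree from hdeg]
        using p.tendsto_eval_div_rpow_natDegree
  have hlt : ∀ᶠ x in atTop,
      p.eval x / x ^ (q.natDegree : ℝ) * u x < q.eval x / x ^ (q.natDegree : ℝ) * v x :=
    Tendsto.eventually_lt (by simpa using hpL.mul hu)
      (by simpa using q.tendsto_eval_div_rpow_natDegree.mul hv) hL
  filter_upwards [hlt, eventually_gt_atTop 0] with x hx hx0
  rw [div_mul_eq_mul_div, div_mul_eq_mul_div] at hx
  exact (div_lt_div_iff_of_pos_right (rpow_pos_of_pos hx0 _)).1 hx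

theorem eventually_abs_eval_sub_le {f g : ℝ[X]} (hdeg : f.natDegree = g.natDegree)
    (hlead : f.leadingCoeff = g.leadingCoeff) (hg : 0 < g.leadingCoeff)
    {C ν ν' : ℝ} (hC : 0 < C) (hν'1 : ν' < 1) (hν' : ν' < ν) :
    ∀ᶠ x in atTop, |f.eval x - g.eval x| ≤ C * (g.eval x * x ^ (-ν') - f.eval x * x ^ (-ν)) := by
  set d : ℕ := g.natDegree
  -- Compare both sides at the scale `x ^ (d - ν')`: the leading terms of `f - g` cancel.
  have hsub : Tendsto (fun x => (f - g).eval x / x ^ ((d : ℝ) - ν')) atTop (𝓝 0) := by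
    refine (f - g).tendsto_eval_div_rpow_atTop_zero fun n hn => ?_
    have hle : n ≤ d := (le_natDegree_of_mem_supp n hn).trans
      ((natDegree_sub_le f g).trans (by rw [hdeg, max_self]))
    have hne : n ≠ d := by
      rintro rfl
      exact mem_support_iff.1 hn (by
        rw [coeff_sub, ← leadingCoeff, ← hdeg, ← leadingCoeff, hlead, sub_self])
    have : (n : ℝ) + 1 ≤ d := by exact_mod_cast lt_of_le_of_ne hle hne
    linarith
  have hrhs : Tendsto (fun x => C * (g.eval x / x ^ (d : ℝ) - f.eval x / x ^ (d : ℝ) * x ^ (ν' - ν)))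
      atTop (𝓝 (C * g.leadingCoeff)) := by
    have hpow : Tendsto (fun x : ℝ => x ^ (ν' - ν)) atTop (𝓝 0) := by
      simpa using tendsto_rpow_neg_atTop (sub_pos.2 hν')
    have hf : Tendsto (fun x => f.eval x / x ^ (d : ℝ)) atTop (𝓝 f.leadingCoeff) := by
      simpa only [hdeg] using f.tendsto_eval_div_rpow_natDegree
    simpa only [mul_zero, sub_zero] using
      (g.tendsto_eval_div_rpow_natDegree.sub (hf.mul hpow)).const_mul C
  have hlt : ∀ᶠ x in atTop, |(f - g).eval x / x ^ ((d : ℝ) - ν')| <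
      C * (g.eval x / x ^ (d : ℝ) - f.eval x / x ^ (d : ℝ) * x ^ (ν' - ν)) :=
    Tendsto.eventually_lt (by simpa using hsub.abs) hrhs (mul_pos hC hg)
  filter_upwards [hlt, eventually_gt_atTop 0] with x hx hx0
  have hρ : x ^ ((d : ℝ) - ν') = x ^ (d : ℝ) * x ^ (-ν') := by
    rw [← rpow_add hx0, sub_eq_add_neg]
  have hν : x ^ (-ν) = x ^ (ν' - ν) * x ^ (-ν') := by
    rw [← rpow_add hx0]; ring_nf
  rw [abs_div, abs_of_pos (rpow_pos_of_pos hx0 _), eval_sub, hρ,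
    div_lt_iff₀ (by positivity)] at hx
  have hrw : C * (g.eval x * x ^ (-ν') - f.eval x * x ^ (-ν)) =
      C * (g.eval x / x ^ (d : ℝ) - f.eval x / x ^ (d : ℝ) * x ^ (ν' - ν)) *
        (x ^ (d : ℝ) * x ^ (-ν')) := by
    rw [hν]; field_simp
  exact hrw ▸ hx.le

theorem not_toLex_lt_of_superConc {a : ℕ → ℝ} {p q : ℝ[X]} {C₁ ν₁ C₂ ν₂ : ℝ} (ha : AbsMono a)
    (hne : ∃ n, a n ≠ 0) (hν₁ : 0 < ν₁) (hν₂ : 0 < ν₂) (hq : 0 < q.leadingCoeff)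
    (hpc : SuperConc a (fun x => p.eval x) C₁ ν₁) (hqc : SuperConc a (fun x => q.eval x) C₂ ν₂) :
    ¬ toLex (p.natDegree, p.leadingCoeff) < toLex (q.natDegree, q.leadingCoeff) := by
  intro hpq
  have hsmall {c ν : ℝ} (hν : 0 < ν) : Tendsto (fun x : ℝ => c * x ^ (-ν)) atTop (𝓝 0) := by
    simpa using (tendsto_rpow_neg_atTop hν).const_mul c
  refine hpc.not_eventually_le ha hne hqc ((eventually_eval_mul_lt_eval_mul hq hpq ?_ ?_).mono
    fun _ => le_of_lt)
  · simpa using (hsmall hν₁).const_add 1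
  · simpa using (hsmall hν₂).const_sub 1

end Polynomial

theorem stmt7 (a : ℕ → ℝ) (f g : Polynomial ℝ) (C ν : ℝ) (hC : 0 < C) (hν : 0 < ν)
    (ha : AbsMono a) (hne : ∃ n, a n ≠ 0)
    (hfl : 0 < f.leadingCoeff) (hgl : 0 < g.leadingCoeff)
    (hconc : SuperConc a (fun x => f.eval x) C ν) :
    (∃ C' > (0 : ℝ), ∃ ν' > (0 : ℝ), SuperConc a (fun x => g.eval x) C' ν') ↔
      f.natDegree = g.natDegree ∧ f.leadingCoeff = g.leadingCoeff := by
  constructor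
  · rintro ⟨C', -, ν', hν', hconc'⟩
    rcases lt_trichotomy (toLex (f.natDegree, f.leadingCoeff))
      (toLex (g.natDegree, g.leadingCoeff)) with h | h | h
    · exact absurd h (not_toLex_lt_of_superConc ha hne hν hν' hgl hconc hconc')
    · simpa [Prod.ext_iff] using h
    · exact absurd h (not_toLex_lt_of_superConc ha hne hν' hν hfl hconc' hconc)
  · rintro ⟨hdeg, hlead⟩
    have hν' : 0 < min ν 1 / 2 := by positivity
    have hwin := eventually_abs_eval_sub_le (ν := ν) (ν' := min ν 1 / 2) hdeg hlead hgl hC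
      (by linarith [min_le_right ν 1]) (by linarith [min_le_left ν 1])
    refine ⟨C, hC, min ν 1 / 2, hν', hconc.of_eventually_window ha ?_ ?_⟩ <;>
      filter_upwards [hwin] with x hx <;> linarith [abs_le.1 hx]
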